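/- Let G be a finite simple graph that is C_3-free, C_5-free and C_6-free, let R be a minimal redundant set of G, and let x ∈ red(R). Then |red(R) ∩ N(x)| ≤ 2 and |red(R) ∩ N²(x)| ≤ 1, where N²(x) is the set of vertices at distance exactly 2 from x. -/

import Mathlib

open Set SimpleGraph

variable {V : Type*}

/-- The closed neighborhood `N[v]` of a vertex. -/
def closedNbr (G : SimpleGraph V) (v : V) : Set V := insert v (G.neighborSet v)

/-- Private neighbors of `x` with respect to `I`. -/
def privSet (G : SimpleGraph V) (x : V) (I : Set V) : Set V :=
  {y ∈ closedNbr G x | closedNbr G y ∩ I = {x}}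

/-- A set is irredundant if every element has a private neighbor. -/
def Irred (G : SimpleGraph V) (I : Set V) : Prop := ∀ x ∈ I, (privSet G x I).Nonempty

/-- A maximal irredundant set. -/
def MaxIrred (G : SimpleGraph V) (I : Set V) : Prop :=
  Irred G I ∧ ∀ J : Set V, Irred G J → I ⊆ J → J = I

def Redundant (G : SimpleGraph V) (R : Set V) : Prop := ¬ Irred G R

def MinRedundant (G : SimpleGraph V) (R : Set V) : Prop :=
  Redundant G R ∧ ∀ S : Set V, S ⊂ R → ¬ Redundant G S

/-- The set of redundant vertices of a set. -/
def redVerts (G : SimpleGraph V) (R : Set V) : Set V := {x ∈ R | privSet G x R = ∅}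

def Dominating (G : SimpleGraph V) (D : Set V) : Prop := ∀ v : V, ∃ d ∈ D, v ∈ closedNbr G d

def MinDominating (G : SimpleGraph V) (D : Set V) : Prop :=
  Dominating G D ∧ ∀ S : Set V, S ⊂ D → ¬ Dominating G S

/-- Vertices at distance at most 2 from `x`. -/
def ball2 (G : SimpleGraph V) (x : V) : Set V :=
  {y | y = x ∨ G.Adj x y ∨ ∃ w, G.Adj x w ∧ G.Adj w y}

/-- Vertices at distance exactly 2 from `x`. -/
def sphere2 (G : SimpleGraph V) (x : V) : Set V :=
  {y | y ≠ x ∧ ¬ G.Adj x y ∧ ∃ w, G.Adj x w ∧ G.Adj w y}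

/-- `G` contains no induced cycle of length `k`. -/
def CFree (G : SimpleGraph V) (k : ℕ) : Prop :=
  IsEmpty (SimpleGraph.cycleGraph k ↪g G)

/-- `S` dominates `B` through open neighborhoods. -/
def DomOver (G : SimpleGraph V) (S B : Set V) : Prop := ∀ b ∈ B, ∃ s ∈ S, G.Adj s b

def MinDomOver (G : SimpleGraph V) (S B : Set V) : Prop :=
  DomOver G S B ∧ ∀ S' : Set V, S' ⊂ S → ¬ DomOver G S' B

/-- `N(Y)`, the union of open neighborhoods of elements of `Y`. -/
def nbrUnion (G : SimpleGraph V) (Y : Set V) : Set V := ⋃ y ∈ Y, G.neighborSet y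

/-- Private edges of `x` with respect to `I` in a hypergraph. -/
def hypPriv (H : Set (Set V)) (x : V) (I : Set V) : Set (Set V) := {E ∈ H | E ∩ I = {x}}

def HypIrred (H : Set (Set V)) (I : Set V) : Prop := ∀ x ∈ I, (hypPriv H x I).Nonempty

def HypMaxIrred (H : Set (Set V)) (I : Set V) : Prop :=
  HypIrred H I ∧ ∀ J : Set V, HypIrred H J → I ⊆ J → J = I

/-- The trace of a hypergraph on a set `S`. -/
def htrace (H : Set (Set V)) (S : Set V) : Set (Set V) :=
  {F | ∃ E ∈ H, F = E ∩ S ∧ (E ∩ S).Nonempty}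

/-- The closed-neighborhood hypergraph of a graph. -/
def nbrHyp (G : SimpleGraph V) : Set (Set V) := Set.range (closedNbr G)

/-- The first `i` vertices in the ordering `v` (zero-based: `v 0, …, v (i-1)`). -/
def firstVerts (v : ℕ → V) (i : ℕ) : Set V := {x | ∃ j < i, v j = x}

/-- The incidence co-bipartite graph of the closed-neighborhood hypergraph of `G`:
`Sum.inl` is the vertex side `V`, `Sum.inr` is the copy `U`. -/
def cobip (G : SimpleGraph V) : SimpleGraph (V ⊕ V) :=
  SimpleGraph.fromRel (fun a b => match a, b with
    | Sum.inl _, Sum.inl _ => True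
    | Sum.inr _, Sum.inr _ => True
    | Sum.inl a, Sum.inr b => a = b ∨ G.Adj a b
    | Sum.inr _, Sum.inl _ => False)

/-! If `z ∈ red(R)` and `s ∈ R \ {z}`, minimality makes `R \ {s}` irredundant, and a private
neighbour `w` of `z` with respect to `R \ {s}` cannot be private with respect to `R`, so
`N[w] ∩ R = {z, s}`. When `z` and `s` are non-adjacent, `w` is a common neighbour of them that sees
no other vertex of `R`. Three redundant neighbours of `x`, or two redundant vertices at distance
two from `x`, together with such witnesses span an induced 5- or 6-cycle. -/

section

variable {G : SimpleGraph V}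

theorem mem_closedNbr {u w : V} : u ∈ closedNbr G w ↔ u = w ∨ G.Adj w u := Iff.rfl

theorem CFree.cliqueFree_three (h : CFree G 3) : G.CliqueFree 3 := by
  by_contra hG
  exact h.false (cycleGraph_three_eq_top ▸ topEmbeddingOfNotCliqueFree hG)

theorem not_adj_of_cliqueFree_three (hG : G.CliqueFree 3) {a b c : V}
    (hab : G.Adj a b) (hac : G.Adj a c) : ¬ G.Adj b c := by
  classical
  exact fun hbc => hG {a, b, c} (is3Clique_triple_iff.mpr ⟨hab, hac, hbc⟩)

/- No distinctness hypotheses are needed here or in the hexagon version: in a cycle of length at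
least five distinct positions have distinct neighbourhoods. -/
theorem not_cFree_five_of_induced_cycle {a b c d e : V}
    (hab : G.Adj a b) (hbc : G.Adj b c) (hcd : G.Adj c d) (hde : G.Adj d e) (hea : G.Adj e a)
    (hac : ¬ G.Adj a c) (had : ¬ G.Adj a d) (hbd : ¬ G.Adj b d)
    (hbe : ¬ G.Adj b e) (hce : ¬ G.Adj c e) : ¬ CFree G 5 := by
  refine fun h => h.false ⟨⟨![a, b, c, d, e], fun i j hij => ?_⟩, fun {i j} => ?_⟩
  · fin_cases i <;> fin_cases j <;> simp_all [G.adj_comm]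
  · change G.Adj (![a, b, c, d, e] i) (![a, b, c, d, e] j) ↔ (cycleGraph 5).Adj i j
    fin_cases i <;> fin_cases j <;> simp +decide <;>
      first | assumption | exact G.adj_symm ‹_› | exact mt G.adj_symm ‹_›

theorem not_cFree_six_of_induced_cycle {a b c d e f : V}
    (hab : G.Adj a b) (hbc : G.Adj b c) (hcd : G.Adj c d) (hde : G.Adj d e) (hef : G.Adj e f)
    (hfa : G.Adj f a) (hac : ¬ G.Adj a c) (had : ¬ G.Adj a d) (hae : ¬ G.Adj a e)
    (hbd : ¬ G.Adj b d) (hbe : ¬ G.Adj b e) (hbf : ¬ G.Adj b f)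
    (hce : ¬ G.Adj c e) (hcf : ¬ G.Adj c f) (hdf : ¬ G.Adj d f) : ¬ CFree G 6 := by
  refine fun h => h.false ⟨⟨![a, b, c, d, e, f], fun i j hij => ?_⟩, fun {i j} => ?_⟩
  · fin_cases i <;> fin_cases j <;> simp_all [G.adj_comm]
  · change G.Adj (![a, b, c, d, e, f] i) (![a, b, c, d, e, f] j) ↔ (cycleGraph 6).Adj i j
    fin_cases i <;> fin_cases j <;> simp +decide <;>
      first | assumption | exact G.adj_symm ‹_› | exact mt G.adj_symm ‹_›

theorem not_adj_of_closedNbr_inter_eq_pair {R : Set V} {w z s u : V}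
    (hw : closedNbr G w ∩ R = {z, s}) (hu : u ∈ R) (huz : u ≠ z) (hus : u ≠ s) :
    ¬ G.Adj w u := fun hwu => by
  have hu' : u ∈ closedNbr G w ∩ R := ⟨Or.inr hwu, hu⟩
  rw [hw] at hu'
  exact hu'.elim huz hus

namespace MinRedundant

variable {R : Set V}

theorem exists_closedNbr_inter_eq_pair (hR : MinRedundant G R) {z s : V}
    (hz : z ∈ redVerts G R) (hs : s ∈ R) (hzs : z ≠ s) : ∃ w ∈ closedNbr G z, closedNbr G w ∩ R = {z, s} := by
  obtain ⟨w, hwz, hw⟩ := not_not.mp (hR.2 _ (sdiff_singleton_ssubset.mpr hs)) z ⟨hz.1, hzs⟩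
  refine ⟨w, hwz, ?_⟩
  rw [← inter_sdiff_assoc] at hw
  have hsw : s ∈ closedNbr G w ∩ R := by
    by_contra hsw
    rw [sdiff_singleton_eq_self hsw] at hw
    exact (hz.2.subset ⟨hwz, hw⟩ : w ∈ (∅ : Set V))
  rw [← insert_eq_of_mem hsw, ← insert_sdiff_singleton, hw, pair_comm]

theorem exists_adj_adj_closedNbr_inter_eq_pair (hR : MinRedundant G R) {z s : V}
    (hz : z ∈ redVerts G R) (hs : s ∈ R) (hzs : z ≠ s) (hadj : ¬ G.Adj z s) :
    ∃ w, G.Adj z w ∧ G.Adj w s ∧ closedNbr G w ∩ R = {z, s} := by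
  obtain ⟨w, hwz, hw⟩ := hR.exists_closedNbr_inter_eq_pair hz hs hzs
  have hsw : s ∈ closedNbr G w := (hw.symm ▸ Or.inr rfl : s ∈ closedNbr G w ∩ R).1
  rcases mem_closedNbr.mp hwz with rfl | hzw
  · rcases mem_closedNbr.mp hsw with rfl | hws
    exacts [(hzs rfl).elim, (hadj hws).elim]
  · rcases mem_closedNbr.mp hsw with rfl | hws
    exacts [(hadj hzw).elim, ⟨w, hzw, hws, hw⟩]

/- The induced hexagon is `z₁ w₁₂ z₂ w₂₃ z₃ w₁₃`. -/
theorem false_of_three_adj_redVerts (hR : MinRedundant G R) (h3 : G.CliqueFree 3)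
    (h6 : CFree G 6) {x z₁ z₂ z₃ : V} (hz₁ : z₁ ∈ redVerts G R) (hz₂ : z₂ ∈ redVerts G R)
    (hz₃ : z₃ ∈ redVerts G R) (hx₁ : G.Adj x z₁) (hx₂ : G.Adj x z₂) (hx₃ : G.Adj x z₃)
    (h₁₂ : z₁ ≠ z₂) (h₁₃ : z₁ ≠ z₃) (h₂₃ : z₂ ≠ z₃) : False := by
  have n₁₂ := not_adj_of_cliqueFree_three h3 hx₁ hx₂
  have n₁₃ := not_adj_of_cliqueFree_three h3 hx₁ hx₃
  have n₂₃ := not_adj_of_cliqueFree_three h3 hx₂ hx₃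
  obtain ⟨w₁₂, a₁₂, b₁₂, hw₁₂⟩ := hR.exists_adj_adj_closedNbr_inter_eq_pair hz₁ hz₂.1 h₁₂ n₁₂
  obtain ⟨w₁₃, a₁₃, b₁₃, hw₁₃⟩ := hR.exists_adj_adj_closedNbr_inter_eq_pair hz₁ hz₃.1 h₁₃ n₁₃
  obtain ⟨w₂₃, a₂₃, b₂₃, hw₂₃⟩ := hR.exists_adj_adj_closedNbr_inter_eq_pair hz₂ hz₃.1 h₂₃ n₂₃
  refine not_cFree_six_of_induced_cycle a₁₂ b₁₂ a₂₃ b₂₃ b₁₃.symm a₁₃.symm n₁₂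
    (fun h => not_adj_of_closedNbr_inter_eq_pair hw₂₃ hz₁.1 h₁₂ h₁₃ h.symm) n₁₃
    (not_adj_of_cliqueFree_three h3 b₁₂.symm a₂₃)
    (not_adj_of_closedNbr_inter_eq_pair hw₁₂ hz₃.1 h₁₃.symm h₂₃.symm)
    (not_adj_of_cliqueFree_three h3 a₁₂ a₁₃) n₂₃
    (fun h => not_adj_of_closedNbr_inter_eq_pair hw₁₃ hz₂.1 h₁₂.symm h₂₃ h.symm)
    (not_adj_of_cliqueFree_three h3 b₂₃.symm b₁₃.symm) h6

/- The induced cycle is `x y₁ z₁ z₂ y₂` if `z₁ ~ z₂`, and `x y₁ z₁ w z₂ y₂` otherwise. -/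
theorem false_of_two_redVerts_mem_sphere2 (hR : MinRedundant G R) (h3 : G.CliqueFree 3)
    (h5 : CFree G 5) (h6 : CFree G 6) {x z₁ z₂ : V} (hx : x ∈ R) (hz₁ : z₁ ∈ redVerts G R)
    (hz₂ : z₂ ∈ redVerts G R) (hx₁ : z₁ ∈ sphere2 G x) (hx₂ : z₂ ∈ sphere2 G x)
    (h₁₂ : z₁ ≠ z₂) : False := by
  obtain ⟨hne₁, hna₁, -⟩ := hx₁
  obtain ⟨hne₂, hna₂, -⟩ := hx₂
  obtain ⟨y₁, a₁, b₁, hy₁⟩ :=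
    hR.exists_adj_adj_closedNbr_inter_eq_pair hz₁ hx hne₁ (fun h => hna₁ h.symm)
  obtain ⟨y₂, a₂, b₂, hy₂⟩ :=
    hR.exists_adj_adj_closedNbr_inter_eq_pair hz₂ hx hne₂ (fun h => hna₂ h.symm)
  have ny₁₂ := not_adj_of_cliqueFree_three h3 b₁.symm b₂.symm
  have ny₁ := not_adj_of_closedNbr_inter_eq_pair hy₁ hz₂.1 h₁₂.symm hne₂
  have ny₂ := not_adj_of_closedNbr_inter_eq_pair hy₂ hz₁.1 h₁₂ hne₁
  by_cases hz : G.Adj z₁ z₂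
  · exact not_cFree_five_of_induced_cycle b₁.symm a₁.symm hz a₂ b₂ hna₁ hna₂ ny₁ ny₁₂
      (fun h => ny₂ h.symm) h5
  · obtain ⟨w, a, b, hw⟩ := hR.exists_adj_adj_closedNbr_inter_eq_pair hz₁ hz₂.1 h₁₂ hz
    exact not_cFree_six_of_induced_cycle b₁.symm a₁.symm a b a₂ b₂ hna₁
      (fun h => not_adj_of_closedNbr_inter_eq_pair hw hx hne₁.symm hne₂.symm h.symm) hna₂
      (not_adj_of_cliqueFree_three h3 a₁ a) ny₁ ny₁₂ hz (fun h => ny₂ h.symm)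
      (not_adj_of_cliqueFree_three h3 b.symm a₂) h6

theorem ncard_redVerts_inter_neighborSet_le_two (hR : MinRedundant G R) (h3 : G.CliqueFree 3)
    (h6 : CFree G 6) (x : V) : (redVerts G R ∩ G.neighborSet x).ncard ≤ 2 := by
  by_contra! h
  obtain ⟨z₁, ⟨hz₁, hx₁⟩, z₂, ⟨hz₂, hx₂⟩, z₃, ⟨hz₃, hx₃⟩, h₁₂, h₁₃, h₂₃⟩ :=
    (two_lt_ncard (finite_of_ncard_pos (by omega))).mp h
  exact hR.false_of_three_adj_redVerts h3 h6 hz₁ hz₂ hz₃ hx₁ hx₂ hx₃ h₁₂ h₁₃ h₂₃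

theorem ncard_redVerts_inter_sphere2_le_one (hR : MinRedundant G R) (h3 : G.CliqueFree 3)
    (h5 : CFree G 5) (h6 : CFree G 6) {x : V} (hx : x ∈ R) :
    (redVerts G R ∩ sphere2 G x).ncard ≤ 1 := by
  by_contra! h
  obtain ⟨z₁, ⟨hz₁, hx₁⟩, z₂, ⟨hz₂, hx₂⟩, h₁₂⟩ :=
    (one_lt_ncard (finite_of_ncard_pos (by omega))).mp h
  exact hR.false_of_two_redVerts_mem_sphere2 h3 h5 h6 hx hz₁ hz₂ hx₁ hx₂ h₁₂

end MinRedundant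

end

theorem stmt10_general (G : SimpleGraph V) (h3 : CFree G 3) (h5 : CFree G 5)
    (h6 : CFree G 6) (R : Set V) (hR : MinRedundant G R) (x : V) (hx : x ∈ redVerts G R) :
    (redVerts G R ∩ G.neighborSet x).ncard ≤ 2 ∧
    (redVerts G R ∩ sphere2 G x).ncard ≤ 1 :=
  ⟨hR.ncard_redVerts_inter_neighborSet_le_two h3.cliqueFree_three h6 x,
    hR.ncard_redVerts_inter_sphere2_le_one h3.cliqueFree_three h5 h6 hx.1⟩

/-- in a `(C₃, C₅, C₆)`-free graph, for a minimal redundant set `R` and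
`x ∈ red(R)`, we have `|red(R) ∩ N(x)| ≤ 2` and `|red(R) ∩ N²(x)| ≤ 1`. -/
theorem stmt10 [Fintype V] (G : SimpleGraph V) (h3 : CFree G 3) (h5 : CFree G 5)
    (h6 : CFree G 6) (R : Set V) (hR : MinRedundant G R) (x : V) (hx : x ∈ redVerts G R) :
    (redVerts G R ∩ G.neighborSet x).ncard ≤ 2 ∧
    (redVerts G R ∩ sphere2 G x).ncard ≤ 1 :=
  stmt10_general G h3 h5 h6 R hR x hx
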